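/- arXiv:math/9906141 — 2 statements merged into one kernel-verified Lean document; each statement's English description precedes it below -/
import Mathlib

section
/- Let R be an exchange ring and let α = (a_1, a_2, …, a_n) be a right unimodular row over R, with n ≥ 2. Then there exists a matrix E ∈ E_n(R) such that the row (c_1, c_2, …, c_n) = αE satisfies: c_2 is a von Neumann regular element of R, c_2 ∈ Ra_2, and c_2R = (1 − g)R for some idempotent g ∈ R with RgR = R. -/
/-!
Choose `r` with `∑ aᵢ rᵢ = 1`. The exchange property for `a₂r₂` gives an idempotent `q ∈ a₂R`
with `1 - q = (1 - a₂r₂)y ∈ a₁r₁y + K`, where `K` is the right ideal generated by `a₃, …, aₙ`.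
A column operation replaces `a₁` by `a₁' = a₁ + q(1 - a₁)`; then `1 - b ∈ a₁'R + K` for
`b = -q(1 - a₁)r₁y(1 - q)(1 - a₁) ∈ qR(1 - q)R`. The exchange property for `b` gives an
idempotent `f ∈ bR ⊆ a₂R` with `1 - f ∈ a₁'R + K`; since `qf = f` and `f ∈ R(1 - q)R`, the
identity `(1 - q)(1 - f) = 1 - q` forces `R(1 - f)R = R`. Finally column operations subtract
`(1 - f)a₂` from `a₂`, leaving `c₂ = fa₂`, which generates `fR` and is regular.
-/

universe u

/-- A unital ring `R` is an *exchange ring* if for every `a ∈ R` there exists an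
idempotent `e ∈ aR` such that `1 - e ∈ (1 - a)R`. -/
def IsExchangeRing (R : Type*) [Ring R] : Prop :=
  ∀ a : R, ∃ e r s : R, IsIdempotentElem e ∧ e = a * r ∧ 1 - e = (1 - a) * s

/-- `E_ι(R)`: the subgroup of `GL_ι(R) = (Matrix ι ι R)ˣ` generated by the elementary
matrices (transvections) `1 + r·e_{ij}`, `i ≠ j`. -/
def ElementarySubgroup (ι : Type*) [Fintype ι] [DecidableEq ι] (R : Type*) [Ring R] :
    Subgroup (Matrix ι ι R)ˣ :=
  Subgroup.closure
    {E : (Matrix ι ι R)ˣ | ∃ i j : ι, ∃ r : R, i ≠ j ∧ E.val = 1 + Matrix.single i j r}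

open Matrix

section Elementary

variable {ι R : Type*} [Fintype ι] [DecidableEq ι] [Ring R]

def transvectionUnit {i j : ι} (hij : i ≠ j) (r : R) : (Matrix ι ι R)ˣ where
  val := 1 + single i j r
  inv := 1 + single i j (-r)
  val_inv := by simp [mul_add, add_mul, hij.symm, add_assoc, ← single_add]
  inv_val := by simp [mul_add, add_mul, hij.symm, add_assoc, ← single_add]

theorem transvectionUnit_mem_elementarySubgroup {i j : ι} (hij : i ≠ j) (r : R) :
    transvectionUnit hij r ∈ ElementarySubgroup ι R :=
  Subgroup.subset_closure ⟨i, j, r, hij, rfl⟩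

theorem vecMul_one_add_single (g : ι → R) (i j : ι) (r : R) :
    g ᵥ* (1 + single i j r) = g + Pi.single j (g i * r) := by
  rw [vecMul_add, vecMul_one, add_right_inj]
  ext k
  rcases eq_or_ne k j with rfl | hk
  · simp [vecMul, dotProduct, single_apply]
  · simp [vecMul, dotProduct, hk, hk.symm]

theorem exists_mem_elementarySubgroup_vecMul_eq_add_single (g : ι → R) (j : ι) {x : R}
    (hx : x ∈ Submodule.span Rᵐᵒᵖ (g '' {j}ᶜ)) :
    ∃ E ∈ ElementarySubgroup ι R, g ᵥ* E.val = g + Pi.single j x := by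
  suffices key : ∀ g' : ι → R, (∀ i ≠ j, g' i = g i) → ∀ t : R,
      ∃ E ∈ ElementarySubgroup ι R, g' ᵥ* E.val = g' + Pi.single j (x * t) by
    simpa using key g (fun _ _ ↦ rfl) 1
  induction hx using Submodule.span_induction with
  | mem x hx =>
    obtain ⟨i, hi, rfl⟩ := hx
    intro g' hg' t
    refine ⟨transvectionUnit hi t, transvectionUnit_mem_elementarySubgroup hi t, ?_⟩
    rw [← hg' i hi]
    exact vecMul_one_add_single g' i j t
  | zero => exact fun g' _ _ ↦ ⟨1, one_mem _, by simp⟩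
  | add x y _ _ ihx ihy =>
    intro g' hg' t
    obtain ⟨E₁, hE₁, h₁⟩ := ihx g' hg' t
    obtain ⟨E₂, hE₂, h₂⟩ := ihy (g' ᵥ* E₁.val) (fun i hi ↦ by simp [h₁, hi, hg' i hi]) t
    refine ⟨E₁ * E₂, mul_mem hE₁ hE₂, ?_⟩
    rw [Units.val_mul, ← vecMul_vecMul, h₂, h₁, add_assoc, ← Pi.single_add, add_mul]
  | smul s x _ ih =>
    intro g' hg' t
    simpa [mul_assoc] using ih g' hg' (s.unop * t)

end Elementary

section ExchangeRing

variable {R : Type*} [Ring R]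

theorem mul_mem_of_mem_rightIdeal {K : Submodule Rᵐᵒᵖ R} {x : R} (hx : x ∈ K) (t : R) :
    x * t ∈ K :=
  K.smul_mem (MulOpposite.op t) hx

theorem sum_sub_mul_sub_mul_mem_span_image_compl {ι : Type*} [Fintype ι] [DecidableEq ι]
    (a r : ι → R) {i j : ι} (hij : i ≠ j) :
    ∑ k, a k * r k - a i * r i - a j * r j ∈ Submodule.span Rᵐᵒᵖ (a '' {i, j}ᶜ) := by
  rw [← Finset.sum_compl_add_sum {i, j}, Finset.sum_pair hij, sub_sub, add_sub_cancel_right]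
  refine Submodule.sum_mem _ fun k hk ↦ mul_mem_of_mem_rightIdeal ?_ _
  exact Submodule.subset_span (Set.mem_image_of_mem a (by simpa using hk))

theorem span_image_compl_pair_le_span_image_compl_add_single {ι : Type*} [DecidableEq ι]
    (g : ι → R) (i j : ι) (v : R) :
    Submodule.span Rᵐᵒᵖ (g '' {i, j}ᶜ) ≤ Submodule.span Rᵐᵒᵖ ((g + Pi.single i v) '' {j}ᶜ) := by
  refine Submodule.span_mono ?_
  rintro _ ⟨k, hk, rfl⟩
  simp only [Set.mem_compl_iff, Set.mem_insert_iff, Set.mem_singleton_iff, not_or] at hk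
  exact ⟨k, hk.2, by simp [hk.1]⟩

theorem TwoSidedIdeal.span_singleton_one_sub_eq_top {q f : R} (hqf : q * f = f)
    (hf : f ∈ TwoSidedIdeal.span {1 - q}) : TwoSidedIdeal.span {1 - f} = ⊤ := by
  set I := TwoSidedIdeal.span ({1 - f} : Set R)
  have h₁ : 1 - f ∈ I := TwoSidedIdeal.subset_span rfl
  have hq : 1 - q ∈ I := by
    have : (1 - q) * (1 - f) = 1 - q := by noncomm_ring; rw [hqf]; abel
    exact this ▸ I.mul_mem_left _ _ h₁
  have hf' : f ∈ I := TwoSidedIdeal.span_le.mpr (by simpa using hq) hf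
  exact I.one_mem_iff.mp (by simpa using I.add_mem h₁ hf')

theorem IsIdempotentElem.mul_mul_mul_self_of_mul_eq {f a z : R} (hf : IsIdempotentElem f)
    (h : a * z = f) : f * a * z * (f * a) = f * a := by
  rw [mul_assoc f, h, hf.eq, ← mul_assoc, hf.eq]

theorem IsIdempotentElem.span_mul_eq_of_mul_eq {f a z : R} (hf : IsIdempotentElem f)
    (h : a * z = f) :
    Submodule.span Rᵐᵒᵖ {f * a} = Submodule.span Rᵐᵒᵖ {f} := by
  refine le_antisymm ?_ ?_ <;>
    rw [Submodule.span_singleton_le_iff_mem, Submodule.mem_span_singleton]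
  · exact ⟨MulOpposite.op a, rfl⟩
  · exact ⟨MulOpposite.op z, by rw [op_smul_eq_mul, mul_assoc, h, hf.eq]⟩

theorem IsExchangeRing.exists_idempotent_with_full_complement (hR : IsExchangeRing R)
    {a₁ a₂ r₁ r₂ : R} {K : Submodule Rᵐᵒᵖ R} (h : 1 - a₁ * r₁ - a₂ * r₂ ∈ K) :
    ∃ w z t f : R, IsIdempotentElem f ∧ a₂ * z = f ∧ 1 - f - (a₁ + a₂ * w) * t ∈ K ∧
      TwoSidedIdeal.span {1 - f} = ⊤ := by
  obtain ⟨q, x, y, hq, hqx, hqy⟩ := hR (a₂ * r₂)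
  have hK : 1 - q - a₁ * (r₁ * y) ∈ K := by
    have : 1 - q - a₁ * (r₁ * y) = (1 - a₁ * r₁ - a₂ * r₂) * y := by rw [hqy]; noncomm_ring
    exact this ▸ mul_mem_of_mem_rightIdeal h y
  set u := (1 - q) * (1 - a₁)
  set b := -(q * (1 - a₁) * (r₁ * y) * u)
  obtain ⟨f, x', y', hf, hfx, hfy⟩ := hR b
  have hw : a₂ * (r₂ * x * (1 - a₁)) = q * (1 - a₁) := by rw [hqx]; noncomm_ring
  refine ⟨r₂ * x * (1 - a₁), -(r₂ * x * (1 - a₁) * (r₁ * y) * u * x'), (1 + r₁ * y * u) * y',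
    f, hf, ?_, ?_, ?_⟩
  · rw [hfx]; simp only [b, ← hw]; noncomm_ring
  · have : 1 - b - (a₁ + q * (1 - a₁)) * (1 + r₁ * y * u)
        = (1 - q - a₁ * (r₁ * y)) * u + q * (1 - q) * (1 - a₁) := by
      simp only [b, u]; noncomm_ring
    rw [hq.mul_one_sub_self, zero_mul, add_zero] at this
    rw [hw, hfy, ← mul_assoc, ← sub_mul, this]
    exact mul_mem_of_mem_rightIdeal (mul_mem_of_mem_rightIdeal hK u) y'
  · refine TwoSidedIdeal.span_singleton_one_sub_eq_top (q := q) ?_ ?_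
    · rw [hfx, ← mul_assoc]; congr 1; simp only [b, mul_neg, ← mul_assoc, hq.eq]
    · set I := TwoSidedIdeal.span ({1 - q} : Set R)
      have h1q : 1 - q ∈ I := TwoSidedIdeal.subset_span rfl
      rw [hfx]
      exact I.mul_mem_right _ _ (neg_mem (I.mul_mem_left _ _ (I.mul_mem_right _ _ h1q)))

end ExchangeRing

/-- The transformed row is `c = α · E`; the second entry is the one of
index `⟨1, _⟩`.  `c₂R = (1-g)R` is an equality of right ideals
(`Submodule.span Rᵐᵒᵖ`), and `RgR = R` is expressed via `TwoSidedIdeal.span`. -/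
theorem stmt5 (R : Type u) [Ring R] (hR : IsExchangeRing R) (n : ℕ) (hn : 2 ≤ n)
    (a : Fin n → R) (ha : ∃ r : Fin n → R, ∑ i, a i * r i = 1) :
    ∃ E ∈ ElementarySubgroup (Fin n) R, ∃ c : Fin n → R,
      c = Matrix.vecMul a E.val ∧
      (∃ y : R, c ⟨1, by omega⟩ * y * c ⟨1, by omega⟩ = c ⟨1, by omega⟩) ∧
      (∃ s : R, c ⟨1, by omega⟩ = s * a ⟨1, by omega⟩) ∧
      (∃ g : R, IsIdempotentElem g ∧ TwoSidedIdeal.span ({g} : Set R) = ⊤ ∧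
        Submodule.span Rᵐᵒᵖ ({c ⟨1, by omega⟩} : Set R)
          = Submodule.span Rᵐᵒᵖ ({1 - g} : Set R)) := by
  obtain ⟨r, hr⟩ := ha
  set j₁ : Fin n := ⟨0, by omega⟩
  set j₂ : Fin n := ⟨1, by omega⟩
  have hj : j₁ ≠ j₂ := by simp [j₁, j₂, Fin.ext_iff]
  obtain ⟨w, z, t, f, hf, hz, hft, hfull⟩ :=
    hR.exists_idempotent_with_full_complement (hr ▸ sum_sub_mul_sub_mul_mem_span_image_compl a r hj)
  set a' := a + Pi.single j₁ (a j₂ * w)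
  have hE₁ : a ᵥ* (transvectionUnit hj.symm w).val = a' := vecMul_one_add_single a j₂ j₁ w
  have h1f : 1 - f ∈ Submodule.span Rᵐᵒᵖ (a' '' {j₂}ᶜ) := by
    have ha'₁ : a' j₁ ∈ Submodule.span Rᵐᵒᵖ (a' '' {j₂}ᶜ) := Submodule.subset_span ⟨j₁, hj, rfl⟩
    simpa [a'] using add_mem (span_image_compl_pair_le_span_image_compl_add_single a j₁ j₂ _ hft)
      (mul_mem_of_mem_rightIdeal ha'₁ t)
  obtain ⟨E₂, hE₂, hc⟩ := exists_mem_elementarySubgroup_vecMul_eq_add_single a' j₂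
    (x := -((1 - f) * a j₂)) (by simpa using mul_mem_of_mem_rightIdeal h1f (-a j₂))
  have hc₂ : (a ᵥ* (transvectionUnit hj.symm w * E₂).val) j₂ = f * a j₂ := by
    rw [Units.val_mul, ← vecMul_vecMul, hE₁, hc]
    simp only [a', Pi.add_apply, Pi.single_eq_same, Pi.single_eq_of_ne hj.symm, add_zero]
    noncomm_ring
  refine ⟨_, mul_mem (transvectionUnit_mem_elementarySubgroup hj.symm w) hE₂, _, rfl,
    ⟨z, ?_⟩, ⟨f, hc₂⟩, ⟨1 - f, hf.one_sub, hfull, ?_⟩⟩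
  · rw [hc₂, hf.mul_mul_mul_self_of_mul_eq hz]
  · rw [hc₂, sub_sub_cancel, hf.span_mul_eq_of_mul_eq hz]
end

section
/- Let R be an exchange ring. If I_1, …, I_n are right ideals of R such that I_1 + ⋯ + I_n = R, then there exist pairwise orthogonal idempotents e_1, …, e_n ∈ R such that e_1 + ⋯ + e_n = 1 and e_j ∈ I_j for all j. -/
/-!
Write `1 = ∑ aⱼ` with `aⱼ ∈ Iⱼ`; it suffices to split an idempotent `f` with `f = ∑ f aⱼ` into
orthogonal idempotents `gⱼ ∈ f aⱼ R`, which is done by induction on the number of summands.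
The exchange property of the corner ring `fRf`, applied to `f a₀`, splits off an idempotent
`g₀ ∈ f a₀ R`, and the induction hypothesis splits `f' = f - g₀` into orthogonal idempotents
`gⱼ = f' cⱼ`. These lie in the wrong right ideals; replacing them by `hⱼ = f cⱼ gⱼ` keeps them
orthogonal idempotents whose sum `x` satisfies `f' x = f'` and `x f' = x`, so `f - x` is an
idempotent orthogonal to the `hⱼ` and, being killed by `f'`, lies in `g₀ R ⊆ f a₀ R`.
-/

universe u

theorem Submodule.exists_sum_eq_of_mem_sum {S M ι : Type*} [Semiring S] [AddCommMonoid M]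
    [Module S M] [Fintype ι] {p : ι → Submodule S M} {x : M} (hx : x ∈ ∑ j, p j) :
    ∃ a : ι → M, (∀ j, a j ∈ p j) ∧ ∑ j, a j = x := by
  have hsum : ∑ j, p j = ⨆ j ∈ Finset.univ, p j := by rw [← Finset.sup_eq_iSup]; rfl
  rw [hsum, Submodule.mem_iSup_finset_iff_exists_sum] at hx
  obtain ⟨μ, hμ⟩ := hx
  exact ⟨fun j => μ j, fun j => (μ j).2, hμ⟩

variable {R ι : Type*} [Ring R] [Fintype ι]

namespace OrthogonalIdempotents

theorem mul_of_sum_mul_eq {g d : ι → R} {e : R} (hg : OrthogonalIdempotents g)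
    (hge : ∑ j, g j = e) (hd : ∀ j, e * d j = g j) :
    OrthogonalIdempotents (fun j => d j * g j) := by
  have hgd : ∀ j k, g j * d k = g j * g k := fun j k => by
    rw [← hd k, ← mul_assoc, ← hge, hg.mul_sum_of_mem (Finset.mem_univ j)]
  refine ⟨fun j => ?_, fun j k hjk => ?_⟩
  · change d j * g j * (d j * g j) = d j * g j
    rw [mul_assoc, ← mul_assoc (g j), hgd, (hg.idem j).eq, (hg.idem j).eq]
  · change d j * g j * (d k * g k) = 0
    rw [mul_assoc, ← mul_assoc (g j), hgd, hg.ortho hjk, zero_mul, mul_zero]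

theorem option_sub_sum {e : ι → R} {f : R} (he : OrthogonalIdempotents e)
    (hf : IsIdempotentElem f) (hfe : f * ∑ j, e j = ∑ j, e j) (hef : (∑ j, e j) * f = ∑ j, e j) :
    OrthogonalIdempotents (Option.elim · (f - ∑ j, e j) e) :=
  have hx := he.isIdempotentElem_sum (s := Finset.univ)
  he.option _ (hx.sub hf hef hfe) (by rw [sub_mul, hfe, hx.eq, sub_self])
    (by rw [mul_sub, hef, hx.eq, sub_self])

end OrthogonalIdempotents

def HasOrthogonalDecomposition (f : R) (a : ι → R) : Prop :=
  ∃ g : ι → R, OrthogonalIdempotents g ∧ ∑ j, g j = f ∧ ∀ j, ∃ r, g j = f * a j * r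

namespace IsExchangeRing

/-- The exchange property of the corner ring `fRf`, for elements `b ∈ fR`. -/
theorem exists_isIdempotentElem_corner (hR : IsExchangeRing R) {f b : R}
    (hf : IsIdempotentElem f) (hb : f * b = b) :
    ∃ g r s : R, IsIdempotentElem g ∧ f * g = g ∧ g * f = g ∧ g = b * r ∧
      f - g = (f - b) * s := by
  obtain ⟨e, r, s, he, her, hes⟩ := hR (b + 1 - f)
  rw [show (1 : R) - (b + 1 - f) = f - b by abel] at hes
  have hfb : f * (b + 1 - f) = b := by
    rw [mul_sub, mul_add, hb, mul_one, hf.eq, add_sub_cancel_right]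
  have hfe : f * e = e + f - 1 := by
    have hfu : f * (1 - e) = 1 - e := by rw [hes, ← mul_assoc, mul_sub, hf.eq, hb]
    calc f * e = f - f * (1 - e) := by rw [mul_sub, mul_one, sub_sub_cancel]
      _ = e + f - 1 := by rw [hfu]; abel
  have hfef : f * e * f = e * f := by
    rw [hfe, sub_mul, add_mul, hf.eq, one_mul, add_sub_cancel_right]
  refine ⟨e * f, r * f, s * f, ?_, ?_, ?_, ?_, ?_⟩
  · change e * f * (e * f) = e * f
    rw [mul_assoc, ← mul_assoc f, hfef, ← mul_assoc, he.eq]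
  · rw [← mul_assoc, hfef]
  · rw [mul_assoc, hf.eq]
  · rw [← hfef, her, ← mul_assoc, hfb, mul_assoc]
  · rw [← one_sub_mul, hes, mul_assoc]

theorem hasOrthogonalDecomposition_option (hR : IsExchangeRing R) {f : R}
    (hf : IsIdempotentElem f) {a : Option ι → R} (ha : ∑ j, f * a j = f)
    (ih : ∀ f' : R, IsIdempotentElem f' → ∀ a' : ι → R, ∑ j, f' * a' j = f' →
      HasOrthogonalDecomposition f' a') :
    HasOrthogonalDecomposition f a := by
  rw [Fintype.sum_option] at ha
  obtain ⟨g₀, r, s, hg₀, hfg₀, hg₀f, hg₀r, hs⟩ :=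
    hR.exists_isIdempotentElem_corner hf (b := f * a none) (by rw [← mul_assoc, hf.eq])
  set f' := f - g₀
  have hf' : IsIdempotentElem f' := hg₀.sub hf hg₀f hfg₀
  have hf'f : f' * f = f' := by rw [sub_mul, hf.eq, hg₀f]
  have hsum' : ∑ j, f' * (a (some j) * s) = f' := by
    calc ∑ j, f' * (a (some j) * s) = f' * ((f - f * a none) * s) := by
          rw [← eq_sub_of_add_eq' ha, Finset.sum_mul, Finset.mul_sum]
          simp only [← mul_assoc, hf'f]
      _ = f' := by rw [← hs, hf'.eq]
  obtain ⟨g, hg, hgf', hgc⟩ := ih f' hf' _ hsum'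
  choose c hc using hgc
  simp only [mul_assoc] at hc
  set d : ι → R := fun j => f * (a (some j) * (s * c j))
  have hd : ∀ j, f' * d j = g j := fun j => by rw [hc, ← mul_assoc, hf'f]
  have hh := hg.mul_of_sum_mul_eq hgf' hd
  set x := ∑ j, d j * g j
  have hfx : f * x = x := by
    simp only [x, Finset.mul_sum, d, ← mul_assoc, hf.eq]
  have hxf' : x * f' = x := by
    simp only [x, Finset.sum_mul, mul_assoc, ← hgf', hg.mul_sum_of_mem (Finset.mem_univ _)]
  have hf'x : f' * x = f' := by
    simp only [x, Finset.mul_sum, ← mul_assoc, hd, (hg.idem _).eq, hgf']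
  have hxf : x * f = x := by rw [← hxf', mul_assoc, hf'f]
  refine ⟨(Option.elim · (f - x) fun j => d j * g j), hh.option_sub_sum hf hfx hxf, ?_, ?_⟩
  · rw [Fintype.sum_option]
    exact sub_add_cancel f x
  · rintro (_ | j)
    · refine ⟨r * (f - x), ?_⟩
      have hf'fx : f' * (f - x) = 0 := by rw [mul_sub, hf'f, hf'x, sub_self]
      calc f - x = (g₀ + f') * (f - x) := by
            rw [add_sub_cancel, mul_sub, hf.eq, hfx]
        _ = f * a none * (r * (f - x)) := by
            rw [add_mul, hf'fx, add_zero, hg₀r, mul_assoc]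
    · exact ⟨s * c j * g j, by simp only [Option.elim, d, mul_assoc]⟩

theorem hasOrthogonalDecomposition (hR : IsExchangeRing R) {f : R} (hf : IsIdempotentElem f)
    {a : ι → R} (ha : ∑ j, f * a j = f) : HasOrthogonalDecomposition f a := by
  revert f a
  refine Fintype.induction_empty_option (P := fun ι _ => ∀ {f : R}, IsIdempotentElem f →
    ∀ {a : ι → R}, ∑ j, f * a j = f → HasOrthogonalDecomposition f a) ?_ ?_ ?_ ι
  · intro α β _ e ih f hf a ha
    let := Fintype.ofEquiv β e.symm
    obtain ⟨g, hg, hgf, hga⟩ := ih hf (a := a ∘ e) ((Equiv.sum_comp e (f * a ·)).trans ha)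
    refine ⟨g ∘ e.symm, hg.embedding e.symm.toEmbedding, ?_, fun j => ?_⟩
    · exact (Equiv.sum_comp e.symm g).trans hgf
    · simpa using hga (e.symm j)
  · intro f _ a ha
    exact ⟨PEmpty.elim, ⟨fun j => j.elim, fun j => j.elim⟩, by simpa using ha, fun j => j.elim⟩
  · exact fun α _ ih f hf a ha =>
      hR.hasOrthogonalDecomposition_option hf ha fun f' hf' a' ha' => ih hf' ha'

end IsExchangeRing

/-- Right ideals are `Rᵐᵒᵖ`-submodules of `R`, and their sum is taken in the monoid of
submodules (where addition is supremum). -/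
theorem stmt16 (R : Type u) [Ring R] (hR : IsExchangeRing R)
    (n : ℕ) (I : Fin n → Submodule Rᵐᵒᵖ R) (hI : ∑ j, I j = ⊤) :
    ∃ e : Fin n → R, (∀ j, IsIdempotentElem (e j)) ∧
      (∀ j k, j ≠ k → e j * e k = 0) ∧ (∑ j, e j = 1) ∧ (∀ j, e j ∈ I j) := by
  obtain ⟨a, haI, ha⟩ := Submodule.exists_sum_eq_of_mem_sum (hI ▸ Submodule.mem_top (x := 1))
  obtain ⟨e, he, hesum, hea⟩ :=
    hR.hasOrthogonalDecomposition IsIdempotentElem.one (by simpa only [one_mul] using ha)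
  refine ⟨e, he.idem, fun _ _ hjk => he.ortho hjk, hesum, fun j => ?_⟩
  obtain ⟨r, hr⟩ := hea j
  rw [hr, one_mul]
  exact (I j).smul_mem (MulOpposite.op r) (haI j)
end
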